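/- Under H₀ (constant parameter), the CUSUM process decomposes exactly as 𝒞ₙ(k) := √n (k/n)(1 − k/n)(U_k − U_k*) = (1/√n)[Σ_{i=1}^k 2g(X_i) − (k/n) Σ_{i=1}^n 2g(X_i)] + Δₙ(k), where Δₙ(k) = (2√n/n²)[((n−k)/(k−1)) Σ_{1≤i<j≤k} f(X_i,X_j) − (k/(n−k−1)) Σ_{k+1≤i<j≤n} f(X_i,X_j)]. -/

import Mathlib

/-!
Writing the definition of `f` as `h x y = f x y + g x + g y + θ` and summing over the pairs
`i < j` of a block of `m` indices, every `g (X i)` occurs `m - 1` times and `θ` occurs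
`m.choose 2` times. Hence each U-statistic is `θ` plus a linear part `(2 / m) ∑ g (X i)` plus a
degenerate part in `f`; the `θ`'s cancel in `U_k - U_k*`, and the CUSUM weights turn the two
linear parts into the bridge `∑_{i<k} 2 g (X i) - (k/n) ∑_{i<n} 2 g (X i)`.
-/

open MeasureTheory ProbabilityTheory Finset

section PairSums

variable {ι M : Type*} [AddCommMonoid M]

theorem sum_offDiag_fst [DecidableEq ι] (s : Finset ι) (a : ι → M) :
    ∑ x ∈ s.offDiag, a x.1 = (#s - 1) • ∑ i ∈ s, a i := by
  have hoff : s.offDiag = (s ×ˢ s).filter (fun x => x.1 ≠ x.2) := by ext; simp [and_assoc]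
  rw [hoff, sum_filter, sum_product, smul_sum]
  refine sum_congr rfl fun i hi => ?_
  rw [← sum_filter, filter_ne]
  simp [card_erase_of_mem hi]

variable [LinearOrder ι]

theorem sum_filter_lt_add (s : Finset ι) (a : ι → M) :
    ∑ x ∈ s ×ˢ s with x.1 < x.2, (a x.1 + a x.2) = (#s - 1) • ∑ i ∈ s, a i := by
  have hswap : ∑ x ∈ s ×ˢ s with x.1 < x.2, a x.2 = ∑ x ∈ s ×ˢ s with x.2 < x.1, a x.1 :=
    sum_equiv (Equiv.prodComm ι ι) (by simp [and_comm]) (fun _ _ => rfl)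
  have hsplit : s.offDiag = {x ∈ s ×ˢ s | x.1 < x.2} ∪ {x ∈ s ×ˢ s | x.2 < x.1} := by grind
  rw [sum_add_distrib, hswap, ← sum_union (by grind [disjoint_left]), ← hsplit, sum_offDiag_fst]

theorem sum_filter_lt_hoeffding (s : Finset ι) {H F : ι → ι → M} {a : ι → M} {c : M}
    (hH : ∀ i j, H i j = F i j + a i + a j + c) :
    ∑ x ∈ s ×ˢ s with x.1 < x.2, H x.1 x.2
      = ∑ x ∈ s ×ˢ s with x.1 < x.2, F x.1 x.2 + (#s - 1) • ∑ i ∈ s, a i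
        + (#s).choose 2 • c := by
  have hH' : ∀ x : ι × ι, H x.1 x.2 = F x.1 x.2 + (a x.1 + a x.2) + c := fun x => by
    rw [hH, add_assoc (F _ _)]
  rw [sum_congr rfl fun x _ => hH' x, sum_add_distrib, sum_add_distrib, sum_filter_lt_add,
    sum_const, card_product_filter_lt]

end PairSums

theorem cusum_scalar_identity {M : Type*} [AddCommGroup M] [Module ℝ M] {k n : ℝ} (hk : 1 < k)
    (hkn : k + 1 < n) (A B G₁ G₂ θ : M) :
    (√n * (k / n) * (1 - k / n)) •
        ((2 / (k * (k - 1))) • (A + (k - 1) • G₁ + (k * (k - 1) / 2) • θ)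
          - (2 / ((n - k) * (n - k - 1))) •
            (B + (n - k - 1) • G₂ + ((n - k) * (n - k - 1) / 2) • θ))
      = (√n)⁻¹ • ((2 : ℝ) • G₁ - (k / n) • ((2 : ℝ) • G₁ + (2 : ℝ) • G₂))
        + (2 * √n / n ^ 2) • (((n - k) / (k - 1)) • A - (k / (n - k - 1)) • B) := by
  have hn : 0 < n := by linarith
  have hsq : √n ^ 2 = n := Real.sq_sqrt hn.le
  have : √n ≠ 0 := (Real.sqrt_pos.2 hn).ne'
  have : k - 1 ≠ 0 := by linarith
  have : n - k ≠ 0 := by linarith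
  have : n - k - 1 ≠ 0 := by linarith
  have : k ≠ 0 := by linarith
  match_scalars <;> field_simp <;> simp [hsq]

theorem cusum_decomposition_general
    (p d n : ℕ)
    (Ω : Type)
    (X : ℕ → Ω → (Fin p → ℝ))
    (h : (Fin p → ℝ) → (Fin p → ℝ) → (Fin d → ℝ))
    (θ : Fin d → ℝ)
    (g : (Fin p → ℝ) → (Fin d → ℝ))
    (f : (Fin p → ℝ) → (Fin p → ℝ) → (Fin d → ℝ))
    (hf : ∀ x y, f x y = h x y - g x - g y - θ)
    (U Ustar C Δ : ℕ → Ω → (Fin d → ℝ))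
    (hU : ∀ k ω, U k ω = ((2 : ℝ) / ((k : ℝ) * ((k : ℝ) - 1))) •
      ∑ q ∈ (Finset.range k ×ˢ Finset.range k).filter (fun q => q.1 < q.2),
        h (X q.1 ω) (X q.2 ω))
    (hUstar : ∀ k ω, Ustar k ω = ((2 : ℝ) / (((n : ℝ) - k) * ((n : ℝ) - k - 1))) •
      ∑ q ∈ ((Finset.Ico k n) ×ˢ (Finset.Ico k n)).filter (fun q => q.1 < q.2),
        h (X q.1 ω) (X q.2 ω))
    (hC : ∀ k ω, C k ω =
      (Real.sqrt n * ((k : ℝ) / n) * (1 - (k : ℝ) / n)) • (U k ω - Ustar k ω))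
    (hΔ : ∀ k ω, Δ k ω = (2 * Real.sqrt n / (n : ℝ) ^ 2) •
      ((((n : ℝ) - k) / ((k : ℝ) - 1)) •
          ∑ q ∈ (Finset.range k ×ˢ Finset.range k).filter (fun q => q.1 < q.2),
            f (X q.1 ω) (X q.2 ω)
        - ((k : ℝ) / ((n : ℝ) - k - 1)) •
          ∑ q ∈ ((Finset.Ico k n) ×ˢ (Finset.Ico k n)).filter (fun q => q.1 < q.2),
            f (X q.1 ω) (X q.2 ω))) :
    ∀ k, 2 ≤ k → k + 2 ≤ n → ∀ ω,
      C k ω = (Real.sqrt n)⁻¹ •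
          (∑ i ∈ Finset.range k, (2 : ℝ) • g (X i ω)
            - ((k : ℝ) / n) • ∑ i ∈ Finset.range n, (2 : ℝ) • g (X i ω))
        + Δ k ω := by
  intro k hk hkn ω
  have hblock : ∀ s : Finset ℕ, 1 ≤ #s →
      ∑ q ∈ (s ×ˢ s).filter (fun q => q.1 < q.2), h (X q.1 ω) (X q.2 ω)
        = ∑ q ∈ (s ×ˢ s).filter (fun q => q.1 < q.2), f (X q.1 ω) (X q.2 ω)
          + ((#s : ℝ) - 1) • ∑ i ∈ s, g (X i ω) + ((#s : ℝ) * (#s - 1) / 2) • θ := by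
    intro s hs
    rw [sum_filter_lt_hoeffding s (H := fun i j => h (X i ω) (X j ω))
        (F := fun i j => f (X i ω) (X j ω)) (a := fun i => g (X i ω))
        (fun i j => by rw [hf]; abel),
      ← Nat.cast_smul_eq_nsmul ℝ, ← Nat.cast_smul_eq_nsmul ℝ, Nat.cast_choose_two,
      Nat.cast_sub hs, Nat.cast_one]
  have hk' : (1 : ℝ) < k := by exact_mod_cast hk
  have hkn' : (k : ℝ) + 1 < n := by exact_mod_cast hkn
  rw [hC, hU, hUstar, hΔ, hblock _ (by rw [card_range]; omega),
    hblock _ (by rw [Nat.card_Ico]; omega), card_range, Nat.card_Ico, Nat.cast_sub (by omega),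
    ← sum_range_add_sum_Ico _ (by omega : k ≤ n), ← smul_sum, ← smul_sum]
  exact cusum_scalar_identity hk' hkn' _ _ _ _ _

/-- Under the null hypothesis, the CUSUM process `𝒞ₙ(k)` decomposes exactly into a
linear bridge of the first-order projections plus the degenerate remainder `Δₙ(k)`. -/
theorem cusum_decomposition
    (p d n : ℕ)
    (Ω : Type) [MeasurableSpace Ω] (μ : Measure Ω) [IsProbabilityMeasure μ]
    (X : ℕ → Ω → (Fin p → ℝ)) (hXmeas : ∀ i, Measurable (X i))
    (hindep : iIndepFun X μ)
    (hident : ∀ i, IdentDistrib (X i) (X 0) μ μ)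
    (h : (Fin p → ℝ) → (Fin p → ℝ) → (Fin d → ℝ))
    (hmeas : Measurable (fun q : (Fin p → ℝ) × (Fin p → ℝ) => h q.1 q.2))
    (hsymm : ∀ x y, h x y = h y x)
    (hint : Integrable (fun ω => h (X 0 ω) (X 1 ω)) μ)
    (θ : Fin d → ℝ) (hθ : θ = ∫ ω, h (X 0 ω) (X 1 ω) ∂μ)
    (g : (Fin p → ℝ) → (Fin d → ℝ))
    (hg : ∀ x, g x = (∫ y, h x y ∂(Measure.map (X 0) μ)) - θ)
    (f : (Fin p → ℝ) → (Fin p → ℝ) → (Fin d → ℝ))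
    (hf : ∀ x y, f x y = h x y - g x - g y - θ)
    (U Ustar C Δ : ℕ → Ω → (Fin d → ℝ))
    (hU : ∀ k ω, U k ω = ((2 : ℝ) / ((k : ℝ) * ((k : ℝ) - 1))) •
      ∑ q ∈ (Finset.range k ×ˢ Finset.range k).filter (fun q => q.1 < q.2),
        h (X q.1 ω) (X q.2 ω))
    (hUstar : ∀ k ω, Ustar k ω = ((2 : ℝ) / (((n : ℝ) - k) * ((n : ℝ) - k - 1))) •
      ∑ q ∈ ((Finset.Ico k n) ×ˢ (Finset.Ico k n)).filter (fun q => q.1 < q.2),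
        h (X q.1 ω) (X q.2 ω))
    (hC : ∀ k ω, C k ω =
      (Real.sqrt n * ((k : ℝ) / n) * (1 - (k : ℝ) / n)) • (U k ω - Ustar k ω))
    (hΔ : ∀ k ω, Δ k ω = (2 * Real.sqrt n / (n : ℝ) ^ 2) •
      ((((n : ℝ) - k) / ((k : ℝ) - 1)) •
          ∑ q ∈ (Finset.range k ×ˢ Finset.range k).filter (fun q => q.1 < q.2),
            f (X q.1 ω) (X q.2 ω)
        - ((k : ℝ) / ((n : ℝ) - k - 1)) •
          ∑ q ∈ ((Finset.Ico k n) ×ˢ (Finset.Ico k n)).filter (fun q => q.1 < q.2),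
            f (X q.1 ω) (X q.2 ω))) :
    ∀ k, 2 ≤ k → k + 2 ≤ n → ∀ ω,
      C k ω = (Real.sqrt n)⁻¹ •
          (∑ i ∈ Finset.range k, (2 : ℝ) • g (X i ω)
            - ((k : ℝ) / n) • ∑ i ∈ Finset.range n, (2 : ℝ) • g (X i ω))
        + Δ k ω :=
  cusum_decomposition_general p d n Ω X h θ g f hf U Ustar C Δ hU hUstar hC hΔ
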